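/- arXiv:math/0409371 — 6 statements merged into one kernel-verified Lean document; each statement's English description precedes it below -/
import Mathlib

section
/- Let R be a ring, S a left Ore multiplicative subset of R, and M a left R-module on which every element of S acts injectively. A submodule N ⊆ M satisfies S⁻¹N = N (i.e., the canonical map N → S⁻¹N, viewed inside S⁻¹M, is surjective) if and only if every element of S acts bijectively on N. -/
open OreLocalization

/-- The canonical map `M → S⁻¹M`, `m ↦ m /ₒ 1`, as an `R`-linear map. -/
noncomputable def oreLocMap (R : Type*) [Ring R] (S : Submonoid R) [OreLocalization.OreSet S]
    (M : Type*) [AddCommGroup M] [Module R M] : M →ₗ[R] M[S⁻¹] where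
  toFun m := m /ₒ (1 : S)
  map_add' m m' := add_oreDiv.symm
  map_smul' r m := by
    rw [RingHom.id_apply, ← smul_one_oreDiv_one_smul,
      oreDiv_smul_char (r • (1 : R)) m 1 1 r 1 (by simp)]
    simp

/-- The localization `S⁻¹N` of a submodule `N ⊆ M`, as the `R`-submodule of `S⁻¹M`
generated by the fractions `n /ₒ s` with `n ∈ N`, `s ∈ S`. -/
noncomputable def oreLocSub {R : Type*} [Ring R] {S : Submonoid R} [OreLocalization.OreSet S]
    {M : Type*} [AddCommGroup M] [Module R M] (N : Submodule R M) : Submodule R M[S⁻¹] :=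
  Submodule.span R {x : M[S⁻¹] | ∃ n ∈ N, ∃ s : S, x = n /ₒ s}

section Aux
variable {R : Type*} [Ring R] {S : Submonoid R} [OreLocalization.OreSet S]
    {M : Type*} [AddCommGroup M] [Module R M]

theorem aux_smul_oreDiv (s : S) (m : M) :
    (s : R) • ((m /ₒ s) : M[S⁻¹]) = m /ₒ (1 : S) := by
  rw [← smul_one_oreDiv_one_smul, oreDiv_smul_char ((s : R) • (1 : R)) m 1 s 1 1 (by simp)]
  simp

theorem aux_inj (hinj : ∀ s : S, Function.Injective fun m : M => (s : R) • m)
    {m m' : M} (h : (m /ₒ (1 : S) : M[S⁻¹]) = m' /ₒ (1 : S)) : m = m' := by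
  rw [oreDiv_eq_iff] at h
  obtain ⟨u, v, h1, h2⟩ := h
  simp only [OneMemClass.coe_one, mul_one] at h2
  rw [Submonoid.smul_def, ← h2] at h1
  exact (hinj u h1.symm)
end Aux

/-- for a submodule `N` of an `S`-injective module `M`, one has `S⁻¹N = N`
(inside `S⁻¹M`) if and only if every element of `S` acts bijectively on `N`. -/
theorem stmt1 {R : Type*} [Ring R] {S : Submonoid R} [OreLocalization.OreSet S]
    {M : Type*} [AddCommGroup M] [Module R M]
    (hinj : ∀ s : S, Function.Injective fun m : M => (s : R) • m)
    (N : Submodule R M) :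
    oreLocSub (S := S) N = N.map (oreLocMap R S M) ↔
      ∀ s : S, Function.Bijective fun n : N => (⟨(s : R) • (n : M), N.smul_mem _ n.2⟩ : N) := by
  constructor
  · intro h s
    constructor
    · intro a b hab
      exact Subtype.ext (hinj s (congrArg Subtype.val hab))
    · intro n
      have hmem : ((n : M) /ₒ s : M[S⁻¹]) ∈ oreLocSub (S := S) N :=
        Submodule.subset_span ⟨n, n.2, s, rfl⟩
      rw [h] at hmem
      obtain ⟨n', hn', heq⟩ := hmem
      -- heq : oreLocMap R S M n' = n /ₒ s
      have h1 : ((s : R) • n') /ₒ (1 : S) = (n : M) /ₒ (1 : S) := by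
        have h2 := congrArg (fun x : M[S⁻¹] => (s : R) • x) heq
        simp only [aux_smul_oreDiv] at h2
        calc ((s : R) • n') /ₒ (1 : S) = oreLocMap R S M ((s : R) • n') := rfl
          _ = (s : R) • oreLocMap R S M n' := map_smul _ _ _
          _ = (n : M) /ₒ (1 : S) := h2
      exact ⟨⟨n', hn'⟩, Subtype.ext (aux_inj hinj h1)⟩
  · intro h
    apply le_antisymm
    · apply Submodule.span_le.2
      rintro x ⟨n, hn, s, rfl⟩
      obtain ⟨n', hn'⟩ := (h s).2 ⟨n, hn⟩
      have hs : (s : R) • (n' : M) = n := congrArg Subtype.val hn'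
      refine ⟨(n' : M), n'.2, ?_⟩
      show ((n' : M) /ₒ (1 : S) : M[S⁻¹]) = n /ₒ s
      rw [oreDiv_eq_iff]
      exact ⟨1, s, by simpa using hs.symm, by simp⟩
    · rintro x ⟨n, hn, rfl⟩
      exact Submodule.subset_span ⟨n, hn, 1, rfl⟩
end

section
/- Let R be a ring, S a left Ore multiplicative subset, and M₁ ⊂ M₂ R-modules on which every element of S acts injectively. Then every element of S acts injectively on the quotient M₂/M₁ if and only if M₁ = M₂ ∩ S⁻¹M₁, where the intersection is taken inside S⁻¹M₂. -/
open OreLocalization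

private theorem mem_oreLocSub_iff {R : Type*} [Ring R] {S : Submonoid R}
    [OreLocalization.OreSet S] {M : Type*} [AddCommGroup M] [Module R M] (N : Submodule R M)
    (x : M[S⁻¹]) : x ∈ oreLocSub (S := S) N ↔ ∃ n ∈ N, ∃ s : S, x = n /ₒ s := by
  constructor
  · intro hx
    induction hx using Submodule.span_induction with
    | mem x h => exact h
    | zero => exact ⟨0, N.zero_mem, 1, (zero_oreDiv _).symm⟩
    | add x y _ _ hx hy =>
      obtain ⟨n, hn, s, rfl⟩ := hx
      obtain ⟨n', hn', s', rfl⟩ := hy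
      rw [oreDiv_add_oreDiv]
      refine ⟨_, N.add_mem ?_ (N.smul_mem _ hn'), _, rfl⟩
      rw [Submonoid.smul_def]
      exact N.smul_mem _ hn
    | smul r x _ hx =>
      obtain ⟨n, hn, s, rfl⟩ := hx
      rw [smul_oreDiv]
      exact ⟨_, N.smul_mem _ hn, _, rfl⟩
  · rintro ⟨n, hn, s, rfl⟩
    exact Submodule.subset_span ⟨n, hn, s, rfl⟩

/-- for submodules `M₁ ⊂ M₂` (here `M₁ = N` is a proper submodule of the module
`M₂`) on which every element of `S` acts injectively, every element of `S` acts injectively on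
`M₂/M₁` if and only if `M₁ = M₂ ∩ S⁻¹M₁` inside `S⁻¹M₂`. -/
theorem stmt3 {R : Type*} [Ring R] {S : Submonoid R} [OreLocalization.OreSet S]
    {M₂ : Type*} [AddCommGroup M₂] [Module R M₂]
    (hinj : ∀ s : S, Function.Injective fun m : M₂ => (s : R) • m)
    (N : Submodule R M₂) (hN : N < ⊤) :
    (∀ s : S, Function.Injective fun x : M₂ ⧸ N => (s : R) • x) ↔
      N = (oreLocSub (S := S) N).comap (oreLocMap R S M₂) := by
  constructor
  · intro h
    refine le_antisymm (fun m hm => Submodule.mem_comap.mpr ((mem_oreLocSub_iff N _).mpr ⟨m, hm, 1, rfl⟩)) (fun m hm => ?_)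
    rw [Submodule.mem_comap, mem_oreLocSub_iff] at hm
    obtain ⟨n, hn, s, hs⟩ := hm
    rw [show oreLocMap R S M₂ m = m /ₒ 1 from rfl, oreDiv_eq_iff] at hs
    obtain ⟨u, v, h1, h2⟩ := hs
    rw [Submonoid.coe_one, mul_one] at h2
    have hvm : v • m ∈ N := by
      rw [← h1, Submonoid.smul_def]
      exact N.smul_mem _ hn
    have := h (u * s) (a₁ := Submodule.Quotient.mk m) (a₂ := 0)
    simp only [smul_zero] at this
    have hz : ((u * s : S) : R) • (Submodule.Quotient.mk m : M₂ ⧸ N) = 0 := by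
      rw [← Submodule.Quotient.mk_smul, Submodule.Quotient.mk_eq_zero]
      rw [← h2] at hvm
      exact hvm
    have := this hz
    rwa [Submodule.Quotient.mk_eq_zero] at this
  · intro hc s x y hxy
    obtain ⟨m, rfl⟩ := Submodule.Quotient.mk_surjective N x
    obtain ⟨m', rfl⟩ := Submodule.Quotient.mk_surjective N y
    simp only [← Submodule.Quotient.mk_smul] at hxy
    rw [← sub_eq_zero, ← Submodule.Quotient.mk_sub, Submodule.Quotient.mk_eq_zero, ← smul_sub]
      at hxy
    have hmem : m - m' ∈ N := by
      rw [hc, Submodule.mem_comap, show oreLocMap R S M₂ (m - m') = (m - m') /ₒ 1 from rfl,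
        mem_oreLocSub_iff]
      refine ⟨(s : R) • (m - m'), hxy, s * 1, ?_⟩
      rw [OreLocalization.expand' (m - m') 1 s, Submonoid.smul_def]
    rwa [← sub_eq_zero, ← Submodule.Quotient.mk_sub, Submodule.Quotient.mk_eq_zero]
end

section
/- Let A be an associative unital algebra over a field K of characteristic 0, let f ∈ A be invertible, and suppose ad f acts locally nilpotently on A (for every u ∈ A there is N with (ad f)^{N+1}(u) = 0). For x ∈ K define Θ_x(u) := Σ_{i≥0} C(x, i) (ad f)^i(u) f^{−i}, where C(x,i) = x(x−1)⋯(x−i+1)/i! (a finite sum by local nilpotence). Then Θ_x is multiplicative: Θ_x(uv) = Θ_x(u)Θ_x(v) for all u, v ∈ A. -/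
/-- The generalized (polynomial) binomial coefficient `C(x, i) = x(x-1)⋯(x-i+1)/i!`. -/
noncomputable def genBinom {K : Type*} [Field K] (x : K) (i : ℕ) : K :=
  (∏ j ∈ Finset.range i, (x - j)) / (Nat.factorial i : K)


open Finset Polynomial
set_option linter.unusedSectionVars false

namespace Stmt9

variable {K : Type*} [Field K] [CharZero K]
variable {A : Type*} [Ring A] [Algebra K A]

/-- ad f -/
def D (f : Aˣ) : A → A := fun v => (f : A) * v - v * (f : A)

lemma iterate_D_zero (f : Aˣ) (j : ℕ) : (D f)^[j] (0:A) = 0 :=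
  Function.iterate_fixed (by simp [D]) j

lemma iterate_D_eq_zero (f : Aˣ) {w : A} {k : ℕ} (h : (D f)^[k] w = 0) {m : ℕ} (hm : k ≤ m) :
    (D f)^[m] w = 0 := by
  obtain ⟨j, rfl⟩ := Nat.exists_eq_add_of_le hm
  rw [Nat.add_comm, Function.iterate_add_apply, h, iterate_D_zero]

lemma commute_inv (f : Aˣ) : Commute ((f : A)) ((f⁻¹ : Aˣ) : A) := by
  show (f : A) * _ = _
  rw [Units.mul_inv, Units.inv_mul]

lemma D_mul_invpow (f : Aˣ) (a : A) (i : ℕ) :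
    D f (a * ((f⁻¹ : Aˣ) : A) ^ i) = D f a * ((f⁻¹ : Aˣ) : A) ^ i := by
  have h := ((commute_inv f).pow_right i).eq
  unfold D
  rw [sub_mul, mul_assoc a, ← h, ← mul_assoc, ← mul_assoc]

lemma conj_step (f : Aˣ) (w : A) (i : ℕ) :
    (f:A) * ((D f)^[i] w * ((f⁻¹:Aˣ):A)^i) * ((f⁻¹:Aˣ):A) =
    (D f)^[i] w * ((f⁻¹:Aˣ):A)^i + (D f)^[i+1] w * ((f⁻¹:Aˣ):A)^(i+1) := by
  set b := (D f)^[i] w * ((f⁻¹:Aˣ):A)^i with hb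
  have h1 : (f:A) * b * ((f⁻¹:Aˣ):A) = b + D f b * ((f⁻¹:Aˣ):A) := by
    unfold D
    rw [sub_mul, mul_assoc b, Units.mul_inv, mul_one]
    abel
  rw [h1]
  congr 1
  rw [hb, D_mul_invpow, Function.iterate_succ_apply', pow_succ, mul_assoc]

lemma nat_sum (f : Aˣ) (B : ℕ) (n : ℕ) (w : A) (hw : (D f)^[B+1] w = 0) :
    ∑ i ∈ Finset.range (B+1),
        ((n.choose i : K)) • ((D f)^[i] w * ((f⁻¹:Aˣ):A)^i)
      = (f:A)^n * w * ((f⁻¹:Aˣ):A)^n := by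
  induction n with
  | zero =>
    rw [pow_zero, pow_zero, one_mul, mul_one]
    rw [Finset.sum_eq_single 0]
    · simp
    · intro i _ hi
      rw [Nat.choose_eq_zero_of_lt (Nat.pos_of_ne_zero hi)]
      simp
    · simp
  | succ n ih =>
    have hstep : (f:A)^(n+1) * w * ((f⁻¹:Aˣ):A)^(n+1)
        = (f:A) * ((f:A)^n * w * ((f⁻¹:Aˣ):A)^n) * ((f⁻¹:Aˣ):A) := by
      rw [pow_succ', pow_succ]
      simp only [mul_assoc]
    rw [hstep, ← ih, Finset.mul_sum, Finset.sum_mul]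
    have hterm : ∀ i, (f:A) * ((n.choose i : K) • ((D f)^[i] w * ((f⁻¹:Aˣ):A)^i)) * ((f⁻¹:Aˣ):A)
        = (n.choose i : K) • ((D f)^[i] w * ((f⁻¹:Aˣ):A)^i)
          + (n.choose i : K) • ((D f)^[i+1] w * ((f⁻¹:Aˣ):A)^(i+1)) := by
      intro i
      rw [mul_smul_comm, smul_mul_assoc, conj_step, smul_add]
    simp only [hterm]
    rw [Finset.sum_add_distrib]
    -- LHS : ∑ choose (n+1) i • a i
    set a : ℕ → A := fun i => (D f)^[i] w * ((f⁻¹:Aˣ):A)^i with ha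
    have haB : a (B+1) = 0 := by rw [ha]; simp [hw]
    rw [Finset.sum_range_succ' (fun i => ((n+1).choose i : K) • a i) B]
    rw [Finset.sum_range_succ' (fun i => (n.choose i : K) • a i) B]
    rw [Finset.sum_range_succ (fun i => (n.choose i : K) • a (i+1)) B]
    simp only [Nat.choose_succ_succ, Nat.cast_add, add_smul, Nat.choose_zero_right,
      Nat.cast_one, one_smul, haB, smul_zero, add_zero]
    rw [Finset.sum_add_distrib]
    abel

lemma prod_cast (n i : ℕ) : (∏ j ∈ Finset.range i, ((n:K) - (j:K))) = (n.descFactorial i : K) := by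
  induction i with
  | zero => simp
  | succ i ih =>
    by_cases h : n ≤ i
    · rw [Finset.prod_range_succ]
      have h0 : (n.descFactorial (i+1) : ℕ) = 0 :=
        Nat.descFactorial_eq_zero_iff_lt.mpr (Nat.lt_succ_of_le h)
      rw [h0, Nat.cast_zero]
      rcases Nat.eq_or_lt_of_le h with rfl | hlt
      · rw [sub_self, mul_zero]
      · have : (n.descFactorial i : ℕ) = 0 := Nat.descFactorial_eq_zero_iff_lt.mpr hlt
        rw [ih, this, Nat.cast_zero, zero_mul]
    · push_neg at h
      rw [Finset.prod_range_succ, ih, Nat.descFactorial_succ, Nat.cast_mul, mul_comm,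
        Nat.cast_sub h.le]

lemma genBinom_natCast (n i : ℕ) : genBinom ((n:K)) i = (n.choose i : K) := by
  unfold genBinom
  have hfac : (Nat.factorial i : K) ≠ 0 := by exact_mod_cast (Nat.factorial_pos i).ne'
  rw [prod_cast, Nat.descFactorial_eq_factorial_mul_choose, Nat.cast_mul, mul_comm,
    mul_div_assoc, div_self hfac, mul_one]

noncomputable def binomPoly (K : Type*) [Field K] (i : ℕ) : Polynomial K :=
  Polynomial.C ((Nat.factorial i : K)⁻¹) * ∏ j ∈ Finset.range i, (Polynomial.X - Polynomial.C (j:K))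

lemma binomPoly_eval (x : K) (i : ℕ) : (binomPoly K i).eval x = genBinom x i := by
  unfold binomPoly genBinom
  simp [Polynomial.eval_prod, div_eq_mul_inv, mul_comm]

/-- `coef f w i = (ad f)^i(w) f^{-i}` -/
def coef (f : Aˣ) (w : A) (i : ℕ) : A := (D f)^[i] w * ((f⁻¹:Aˣ):A)^i

lemma nat_sum' (f : Aˣ) (B : ℕ) (n : ℕ) (w : A) (hw : (D f)^[B+1] w = 0) :
    ∑ i ∈ Finset.range (B+1), ((n.choose i : K)) • coef f w i
      = (f:A)^n * w * ((f⁻¹:Aˣ):A)^n := nat_sum f B n w hw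

lemma main_core (f : Aˣ) (B : ℕ) (u v : A)
    (hu : (D f)^[B+1] u = 0) (hv : (D f)^[B+1] v = 0) (huv : (D f)^[B+1] (u*v) = 0) (x : K) :
    ∑ i ∈ Finset.range (B+1), genBinom x i • coef f (u*v) i
      = (∑ i ∈ Finset.range (B+1), genBinom x i • coef f u i) *
        (∑ j ∈ Finset.range (B+1), genBinom x j • coef f v j) := by
  classical
  have hnat : ∀ n : ℕ,
      (∑ i ∈ Finset.range (B+1), genBinom ((n:K)) i • coef f (u*v) i)
        - (∑ i ∈ Finset.range (B+1), genBinom ((n:K)) i • coef f u i) *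
          (∑ j ∈ Finset.range (B+1), genBinom ((n:K)) j • coef f v j) = 0 := by
    intro n
    simp only [genBinom_natCast]
    rw [nat_sum' f B n (u*v) huv, nat_sum' f B n u hu, nat_sum' f B n v hv, sub_eq_zero]
    have hone : ((f⁻¹:Aˣ):A)^n * (f:A)^n = 1 := by
      have h2 : ((f⁻¹)^n * f^n : Aˣ) = 1 := by group
      calc ((f⁻¹:Aˣ):A)^n * (f:A)^n = (((f⁻¹)^n * f^n : Aˣ) : A) := by
            rw [Units.val_mul, Units.val_pow_eq_pow_val, Units.val_pow_eq_pow_val]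
        _ = 1 := by rw [h2, Units.val_one]
    simp only [mul_assoc]
    rw [← mul_assoc (((f⁻¹:Aˣ):A)^n) ((f:A)^n) (v * ((f⁻¹:Aˣ):A)^n), hone, one_mul]
  have hall : ∀ y : K,
      (∑ i ∈ Finset.range (B+1), genBinom y i • coef f (u*v) i)
        - (∑ i ∈ Finset.range (B+1), genBinom y i • coef f u i) *
          (∑ j ∈ Finset.range (B+1), genBinom y j • coef f v j) = 0 := by
    intro y
    have hexp : ∀ z : K,
        (∑ i ∈ Finset.range (B+1), genBinom z i • coef f (u*v) i)
          - (∑ i ∈ Finset.range (B+1), genBinom z i • coef f u i) *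
            (∑ j ∈ Finset.range (B+1), genBinom z j • coef f v j)
        = (∑ i ∈ Finset.range (B+1), genBinom z i • coef f (u*v) i)
          - ∑ i ∈ Finset.range (B+1), ∑ j ∈ Finset.range (B+1),
              (genBinom z i * genBinom z j) • (coef f u i * coef f v j) := by
      intro z
      rw [Finset.sum_mul_sum]
      simp only [smul_mul_smul_comm]
    apply (Module.forall_dual_apply_eq_zero_iff K _).mp
    intro ℓ
    set p : Polynomial K :=
      (∑ i ∈ Finset.range (B+1), binomPoly K i * Polynomial.C (ℓ (coef f (u*v) i)))
      - ∑ i ∈ Finset.range (B+1), ∑ j ∈ Finset.range (B+1),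
          binomPoly K i * binomPoly K j * Polynomial.C (ℓ (coef f u i * coef f v j)) with hp
    have hpe : ∀ z : K, p.eval z
        = ℓ ((∑ i ∈ Finset.range (B+1), genBinom z i • coef f (u*v) i)
            - (∑ i ∈ Finset.range (B+1), genBinom z i • coef f u i) *
              (∑ j ∈ Finset.range (B+1), genBinom z j • coef f v j)) := by
      intro z
      rw [hexp z, map_sub]
      simp only [map_sum, map_smul, smul_eq_mul, hp, Polynomial.eval_sub,
        Polynomial.eval_finset_sum, Polynomial.eval_mul, Polynomial.eval_C, binomPoly_eval]
    have hp0 : p = 0 := by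
      apply Polynomial.eq_zero_of_infinite_isRoot
      apply Set.Infinite.mono (s := Set.range ((↑) : ℕ → K))
      · rintro _ ⟨n, rfl⟩
        show p.IsRoot _
        rw [Polynomial.IsRoot, hpe, hnat n, map_zero]
      · exact Set.infinite_range_of_injective Nat.cast_injective
    rw [← hpe y, hp0, Polynomial.eval_zero]
  exact sub_eq_zero.mp (hall x)

end Stmt9

/-- let `f` be invertible with `ad f` locally nilpotent, and let
`Θ x u = Σ_{i≥0} C(x,i) (ad f)^i(u) f^{-i}` (a finite sum by local nilpotence, which we express
by requiring the defining identity for every truncation point). Then each `Θ x` is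
multiplicative: `Θ x (u * v) = Θ x u * Θ x v`. -/
theorem stmt9 {K : Type*} [Field K] [CharZero K]
    {A : Type*} [Ring A] [Algebra K A]
    (f : Aˣ)
    (hnil : ∀ u : A, ∃ N : ℕ, (fun v : A => (f : A) * v - v * (f : A))^[N + 1] u = 0)
    (Θ : K → A → A)
    (hΘ : ∀ (x : K) (u : A) (N : ℕ),
      (fun v : A => (f : A) * v - v * (f : A))^[N + 1] u = 0 →
      Θ x u = ∑ i ∈ Finset.range (N + 1),
        genBinom x i • ((fun v : A => (f : A) * v - v * (f : A))^[i] u *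
          ((f⁻¹ : Aˣ) : A) ^ i)) :
    ∀ (x : K) (u v : A), Θ x (u * v) = Θ x u * Θ x v := by
  intro x u v
  obtain ⟨N, hN⟩ := hnil u
  obtain ⟨M, hM⟩ := hnil v
  obtain ⟨L, hL⟩ := hnil (u * v)
  have hN' : (Stmt9.D f)^[N+1] u = 0 := hN
  have hM' : (Stmt9.D f)^[M+1] v = 0 := hM
  have hL' : (Stmt9.D f)^[L+1] (u * v) = 0 := hL
  set B : ℕ := max (max N M) L with hB
  have hu : (Stmt9.D f)^[B+1] u = 0 :=
    Stmt9.iterate_D_eq_zero f hN' (Nat.succ_le_succ ((le_max_left N M).trans (le_max_left _ L)))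
  have hv : (Stmt9.D f)^[B+1] v = 0 :=
    Stmt9.iterate_D_eq_zero f hM' (Nat.succ_le_succ ((le_max_right N M).trans (le_max_left _ L)))
  have huv : (Stmt9.D f)^[B+1] (u * v) = 0 :=
    Stmt9.iterate_D_eq_zero f hL' (Nat.succ_le_succ (le_max_right _ L))
  have hTuv : Θ x (u * v)
      = ∑ i ∈ Finset.range (B+1), genBinom x i • Stmt9.coef f (u*v) i := hΘ x (u*v) B huv
  have hTu : Θ x u
      = ∑ i ∈ Finset.range (B+1), genBinom x i • Stmt9.coef f u i := hΘ x u B hu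
  have hTv : Θ x v
      = ∑ i ∈ Finset.range (B+1), genBinom x i • Stmt9.coef f v i := hΘ x v B hv
  rw [hTuv, hTu, hTv]
  exact Stmt9.main_core f B u v hu hv huv x
end

section
/- Let A be an associative unital algebra over a field K of characteristic 0, f ∈ A invertible with ad f acting locally nilpotently on A, and for x ∈ K let Θ_x(u) := Σ_{i≥0} C(x, i) (ad f)^i(u) f^{−i}. Then Θ_x ∘ Θ_y = Θ_{x+y} for all x, y ∈ K; in particular each Θ_x is bijective with inverse Θ_{−x}. -/
open Finset Polynomial
open PowerSeries hiding aeval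

theorem genBinom_eq_choose {K : Type*} [Field K] [CharZero K] (x : K) (n : ℕ) :
    genBinom x n = Ring.choose x n := by
  rw [Ring.choose_eq_smul, ← aeval_eq_smeval, ← eval_map_algebraMap, descPochhammer_map,
    descPochhammer_eval_eq_prod_range, genBinom, smul_eq_mul, div_eq_inv_mul]

section LocallyNilpotent

variable {R M : Type*} [CommRing R] [AddCommGroup M] [Module R M] {E : Module.End R M}

theorem Polynomial.aeval_apply_eq_sum_range_of_pow_apply_eq_zero {u : M} {N : ℕ}
    (hu : (E ^ N) u = 0) (p : R[X]) :
    aeval E p u = ∑ i ∈ range N, p.coeff i • (E ^ i) u := by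
  rw [aeval_eq_sum_range' (n := max N (p.natDegree + 1)) (by omega), LinearMap.sum_apply]
  refine (sum_subset (range_subset_range.2 (le_max_left _ _)) fun i _ hiN => ?_).symm
  obtain ⟨k, rfl⟩ := Nat.exists_eq_add_of_le (not_lt.1 (mem_range.not.1 hiN))
  rw [LinearMap.smul_apply, add_comm, pow_add, Module.End.mul_apply, hu, map_zero, smul_zero]

theorem Polynomial.pow_apply_aeval_apply (p : R[X]) (n : ℕ) (u : M) :
    (E ^ n) (aeval E p u) = aeval E p ((E ^ n) u) := by
  simpa using congrArg (· u) ((Commute.all (X ^ n) p).map (aeval E)).eq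

theorem aeval_trunc_mul_apply {u : M} {N : ℕ} (hu : (E ^ N) u = 0) (P Q : R⟦X⟧) :
    aeval E (trunc N (P * Q)) u = aeval E (trunc N P) (aeval E (trunc N Q) u) := by
  rw [← Module.End.mul_apply, ← map_mul, aeval_apply_eq_sum_range_of_pow_apply_eq_zero hu,
    aeval_apply_eq_sum_range_of_pow_apply_eq_zero hu]
  refine sum_congr rfl fun i hi => ?_
  rw [coeff_trunc, if_pos (mem_range.1 hi),
    coeff_mul_eq_coeff_trunc_mul_trunc _ _ (mem_range.1 hi), ← Polynomial.coe_mul,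
    Polynomial.coeff_coe]

variable [BinomialRing R] {Φ : R → M → M}
  (hΦ : ∀ x u N, (E ^ (N + 1)) u = 0 →
    Φ x u = ∑ i ∈ range (N + 1), Ring.choose x i • (E ^ i) u)
include hΦ

theorem eq_aeval_trunc_binomialSeries {x : R} {u : M} {N : ℕ} (hN : (E ^ (N + 1)) u = 0) :
    Φ x u = aeval E (trunc (N + 1) (binomialSeries R x)) u := by
  rw [hΦ x u N hN, aeval_apply_eq_sum_range_of_pow_apply_eq_zero hN]
  refine sum_congr rfl fun i hi => ?_
  rw [coeff_trunc, if_pos (mem_range.1 hi), binomialSeries_coeff, smul_eq_mul, mul_one]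

variable (hE : ∀ u, ∃ N, (E ^ (N + 1)) u = 0)
include hE

theorem comp_eq_add_of_eq_sum_choose_smul_pow (x y : R) : Φ x ∘ Φ y = Φ (x + y) := by
  ext u
  obtain ⟨N, hN⟩ := hE u
  have hΦy := eq_aeval_trunc_binomialSeries hΦ (x := y) hN
  have hN' : (E ^ (N + 1)) (Φ y u) = 0 := by rw [hΦy, pow_apply_aeval_apply, hN, map_zero]
  rw [Function.comp_apply, eq_aeval_trunc_binomialSeries hΦ hN', hΦy,
    eq_aeval_trunc_binomialSeries hΦ hN, binomialSeries_add, aeval_trunc_mul_apply hN]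

theorem zero_eq_id_of_eq_sum_choose_smul_pow : Φ 0 = id := by
  ext u
  obtain ⟨N, hN⟩ := hE u
  rw [eq_aeval_trunc_binomialSeries hΦ hN, binomialSeries_zero, trunc_one, map_one,
    Module.End.one_apply, id]

end LocallyNilpotent

section Flow

variable {G α : Type*} [AddGroup G] {Φ : G → α → α}

theorem leftInverse_neg_of_comp_eq_add (hadd : ∀ x y, Φ x ∘ Φ y = Φ (x + y)) (hzero : Φ 0 = id)
    (x : G) : Function.LeftInverse (Φ (-x)) (Φ x) := fun u => by
  rw [← Function.comp_apply (f := Φ (-x)), hadd, neg_add_cancel, hzero, id]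

end Flow

open LinearMap in
theorem mulRight_mul_sub_pow_apply {K A : Type*} [CommSemiring K] [Ring A] [Algebra K A]
    {a b : A} (hab : Commute a b) (n : ℕ) (v : A) :
    ((mulRight K b * (mulLeft K a - mulRight K a)) ^ n) v
      = (fun v : A => a * v - v * a)^[n] v * b ^ n := by
  have hR : Commute (mulRight K b) (mulRight K a) := by
    rw [Commute, SemiconjBy, Module.End.mul_eq_comp, Module.End.mul_eq_comp, ← mulRight_mul,
      ← mulRight_mul, hab.eq]
  rw [((commute_mulLeft_right a b).symm.sub_right hR).mul_pow, Module.End.mul_apply,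
    pow_mulRight, mulRight_apply, Module.End.pow_apply]
  rfl

/-- with `f` invertible, `ad f` locally nilpotent and
`Θ x u = Σ_{i≥0} C(x,i) (ad f)^i(u) f^{-i}`, we have `Θ x ∘ Θ y = Θ (x+y)`; in particular each
`Θ x` is bijective with inverse `Θ (-x)`. -/
theorem stmt10 {K : Type*} [Field K] [CharZero K]
    {A : Type*} [Ring A] [Algebra K A]
    (f : Aˣ)
    (hnil : ∀ u : A, ∃ N : ℕ, (fun v : A => (f : A) * v - v * (f : A))^[N + 1] u = 0)
    (Θ : K → A → A)
    (hΘ : ∀ (x : K) (u : A) (N : ℕ),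
      (fun v : A => (f : A) * v - v * (f : A))^[N + 1] u = 0 →
      Θ x u = ∑ i ∈ Finset.range (N + 1),
        genBinom x i • ((fun v : A => (f : A) * v - v * (f : A))^[i] u *
          ((f⁻¹ : Aˣ) : A) ^ i)) :
    (∀ (x y : K), Θ x ∘ Θ y = Θ (x + y)) ∧
    (∀ x : K, Function.Bijective (Θ x) ∧
      Function.LeftInverse (Θ (-x)) (Θ x) ∧ Function.RightInverse (Θ (-x)) (Θ x)) := by
  set E : Module.End K A := LinearMap.mulRight K ((f⁻¹ : Aˣ) : A) *
    (LinearMap.mulLeft K (f : A) - LinearMap.mulRight K (f : A))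
  have hEpow : ∀ n v, (E ^ n) v =
      (fun v : A => (f : A) * v - v * (f : A))^[n] v * ((f⁻¹ : Aˣ) : A) ^ n :=
    mulRight_mul_sub_pow_apply (Commute.refl (f : A)).units_inv_right
  have hE : ∀ u, ∃ N, (E ^ (N + 1)) u = 0 :=
    fun u => (hnil u).imp fun N hN => by rw [hEpow, hN, zero_mul]
  have hΘE : ∀ x u N, (E ^ (N + 1)) u = 0 →
      Θ x u = ∑ i ∈ range (N + 1), Ring.choose x i • (E ^ i) u := by
    intro x u N hN
    rw [hEpow, ← Units.val_pow_eq_pow_val, Units.mul_left_eq_zero] at hN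
    simp only [hΘ x u N hN, hEpow, genBinom_eq_choose]
  have hadd := comp_eq_add_of_eq_sum_choose_smul_pow hΘE hE
  have hleft := leftInverse_neg_of_comp_eq_add hadd (zero_eq_id_of_eq_sum_choose_smul_pow hΘE hE)
  refine ⟨hadd, fun x => ?_⟩
  have hright : Function.RightInverse (Θ (-x)) (Θ x) := by
    have h := hleft (-x)
    rwa [neg_neg] at h
  exact ⟨⟨(hleft x).injective, hright.surjective⟩, hleft x, hright⟩
end

section
/- Let R be a ring, S a left Ore multiplicative subset, and M an R-module of finite length on which every element of S acts injectively. Then M admits a composition series 0 = N₀ ⊂ N₁ ⊂ ⋯ ⊂ N_k = M together with indices 0 = i₀ < i₁ < ⋯ < i_t = k such that: (a) for indices a, b, S⁻¹N_a = S⁻¹N_b inside S⁻¹M if and only if a and b lie in the same block [i_{j−1}+1, i_j]; and (b) every element of S acts injectively on each block quotient N_{i_j}/N_{i_{j−1}}. -/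
open OreLocalization

section Helpers
variable {R : Type*} [Ring R] {S : Submonoid R} [OreLocalization.OreSet S]
    {M : Type*} [AddCommGroup M] [Module R M]

/-- The `S`-saturation of a submodule. -/
def satS (S : Submonoid R) [OreLocalization.OreSet S] (N : Submodule R M) : Submodule R M where
  carrier := {x | ∃ u : S, (u : R) • x ∈ N}
  zero_mem' := ⟨1, by simp⟩
  add_mem' := by
    rintro x y ⟨u, hu⟩ ⟨v, hv⟩
    obtain ⟨r', s', h⟩ := oreCondition (v : R) u
    refine ⟨s' * v, ?_⟩
    have h1 : ((s' * v : S) : R) • x = r' • ((u : R) • x) := by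
      push_cast; rw [smul_smul, h, mul_smul]
    have h2 : ((s' * v : S) : R) • y = (s' : R) • ((v : R) • y) := by
      push_cast; rw [smul_smul]
    rw [smul_add, h1, h2]
    exact add_mem (Submodule.smul_mem _ _ hu) (Submodule.smul_mem _ _ hv)
  smul_mem' := by
    rintro r x ⟨u, hu⟩
    obtain ⟨r', s', h⟩ := oreCondition r u
    refine ⟨s', ?_⟩
    rw [smul_smul, h, mul_smul]
    exact Submodule.smul_mem _ _ hu

lemma mem_satS {N : Submodule R M} {x : M} : x ∈ satS S N ↔ ∃ u : S, (u : R) • x ∈ N := Iff.rfl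

lemma le_satS (N : Submodule R M) : N ≤ satS S N := fun x hx => ⟨1, by simpa⟩

lemma satS_mono {N N' : Submodule R M} (h : N ≤ N') : satS S N ≤ satS S N' := by
  rintro x ⟨u, hu⟩; exact ⟨u, h hu⟩

lemma isSatd_satS (N : Submodule R M) :
    ∀ (s : S) (x : M), (s : R) • x ∈ satS S N → x ∈ satS S N := by
  rintro s x ⟨u, hu⟩
  exact ⟨u * s, by push_cast; rw [mul_smul]; exact hu⟩

lemma satS_eq_self {N : Submodule R M} (h : ∀ (s : S) (x : M), (s : R) • x ∈ N → x ∈ N) :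
    satS S N = N :=
  le_antisymm (by rintro x ⟨u, hu⟩; exact h u x hu) (le_satS N)

/-- The set of fractions with numerator in `N`, as a submodule of `M[S⁻¹]`. -/
def locSet (N : Submodule R M) : Submodule R M[S⁻¹] where
  carrier := {x | ∃ n ∈ N, ∃ s : S, x = n /ₒ s}
  zero_mem' := ⟨0, N.zero_mem, 1, (zero_oreDiv _).symm⟩
  add_mem' := by
    rintro _ _ ⟨n, hn, s, rfl⟩ ⟨n', hn', s', rfl⟩
    obtain ⟨r', s'', h⟩ := oreCondition (s : R) s'
    refine ⟨s'' • n + r' • n', ?_, s'' * s, oreDiv_add_char s s' r' s'' h⟩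
    exact add_mem (by rw [Submonoid.smul_def]; exact Submodule.smul_mem _ _ hn)
      (Submodule.smul_mem _ _ hn')
  smul_mem' := by
    rintro r _ ⟨n, hn, s, rfl⟩
    obtain ⟨r', s', h⟩ := oreCondition r s
    refine ⟨r' • n, Submodule.smul_mem _ _ hn, s' * 1, ?_⟩
    rw [← smul_one_oreDiv_one_smul,
      oreDiv_smul_char (r • (1 : R)) n 1 s r' s' (by simpa using h)]

lemma smul_coe_oreDiv (m : M) (s : S) : (s : R) • (m /ₒ s) = m /ₒ (1 : S) := by
  rw [← smul_one_oreDiv_one_smul,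
    oreDiv_smul_char ((s : R) • (1 : R)) m 1 s 1 1 (by simp)]
  simp

lemma oreDiv_mem_locSet_iff {N : Submodule R M} {m : M} {s : S} :
    m /ₒ s ∈ locSet N ↔ m ∈ satS S N := by
  constructor
  · intro h
    have h1 : m /ₒ (1 : S) ∈ locSet N := by
      rw [← smul_coe_oreDiv m s]; exact Submodule.smul_mem _ _ h
    obtain ⟨n, hn, s', heq⟩ := h1
    rw [oreDiv_eq_iff] at heq
    obtain ⟨u, v, h1, h2⟩ := heq
    simp only [Submonoid.coe_one, mul_one] at h2
    refine ⟨u * s', ?_⟩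
    have : ((u * s' : S) : R) • m = u • n := by
      rw [h1, Submonoid.coe_mul, h2]
    rw [this, Submonoid.smul_def]
    exact Submodule.smul_mem _ _ hn
  · rintro ⟨u, hu⟩
    exact ⟨(u : R) • m, hu, u * s, by rw [OreLocalization.expand' m s u, Submonoid.smul_def]⟩

lemma oreLocSub_eq_locSet (N : Submodule R M) : oreLocSub (S := S) N = locSet N :=
  Submodule.span_eq (locSet N)

lemma oreLocSub_le_iff {N N' : Submodule R M} :
    oreLocSub (S := S) N ≤ oreLocSub (S := S) N' ↔ satS S N ≤ satS S N' := by
  rw [oreLocSub_eq_locSet, oreLocSub_eq_locSet]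
  constructor
  · rintro h x ⟨u, hu⟩
    have : ((u : R) • x) /ₒ (1 : S) ∈ locSet N' := h ⟨(u : R) • x, hu, 1, rfl⟩
    exact isSatd_satS N' u x (oreDiv_mem_locSet_iff.mp this)
  · rintro h _ ⟨n, hn, s, rfl⟩
    exact oreDiv_mem_locSet_iff.mpr (h (le_satS N hn))

lemma oreLocSub_eq_iff {N N' : Submodule R M} :
    oreLocSub (S := S) N = oreLocSub (S := S) N' ↔ satS S N = satS S N' := by
  rw [le_antisymm_iff, le_antisymm_iff, oreLocSub_le_iff, oreLocSub_le_iff]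

end Helpers


section Chains
variable {α : Type*} [PartialOrder α]

lemma chain_le {c : ℕ → α} {m : ℕ} (h : ∀ a < m, c a < c (a + 1)) :
    ∀ {a b : ℕ}, a ≤ b → b ≤ m → c a ≤ c b := by
  intro a b hab hbm
  induction b, hab using Nat.le_induction with
  | base => exact le_rfl
  | succ b hab ih => exact (ih (by omega)).trans (h b (by omega)).le

lemma chain_lt {c : ℕ → α} {m : ℕ} (h : ∀ a < m, c a < c (a + 1)) :
    ∀ {a b : ℕ}, a < b → b ≤ m → c a < c b := by
  intro a b hab hbm
  obtain ⟨b, rfl⟩ : ∃ b', b = b' + 1 := ⟨b - 1, by omega⟩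
  exact (chain_le h (by omega) (by omega)).trans_lt (h b (by omega))

lemma exists_cov_chain (wflt : WellFounded ((· < ·) : α → α → Prop))
    (wfgt : WellFounded ((· > ·) : α → α → Prop)) (Q : α) :
    ∀ P : α, Q ≤ P → ∃ (m : ℕ) (c : ℕ → α), c 0 = Q ∧ c m = P ∧ ∀ a < m, c a ⋖ c (a + 1) := by
  intro P
  refine wflt.induction (C := fun P => Q ≤ P →
    ∃ (m : ℕ) (c : ℕ → α), c 0 = Q ∧ c m = P ∧ ∀ a < m, c a ⋖ c (a + 1)) P ?_
  intro X ih hQX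
  rcases eq_or_lt_of_le hQX with rfl | hlt
  · exact ⟨0, fun _ => Q, rfl, rfl, by omega⟩
  · obtain ⟨Y, ⟨hQY, hYX⟩, hmax⟩ :=
      wfgt.has_min {Z | Q ≤ Z ∧ Z < X} ⟨Q, le_rfl, hlt⟩
    obtain ⟨m, c, h0, hm, hcov⟩ := ih Y hYX hQY
    have hcovYX : Y ⋖ X := ⟨hYX, fun Z hYZ hZX => hmax Z ⟨hQY.trans hYZ.le, hZX⟩ hYZ⟩
    refine ⟨m + 1, fun a => if a ≤ m then c a else X, by simp [h0], by simp, ?_⟩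
    intro a ha
    rcases lt_or_eq_of_le (by omega : a ≤ m) with h' | rfl
    · simpa [show a ≤ m by omega, show a + 1 ≤ m by omega] using hcov a h'
    · simpa [hm] using hcovYX

end Chains

section Main
variable {R : Type*} [Ring R] {S : Submonoid R} [OreLocalization.OreSet S]
    {M : Type*} [AddCommGroup M] [Module R M]

lemma inv_main [IsArtinian R M] [IsNoetherian R M]
    (hinj : ∀ s : S, Function.Injective fun m : M => (s : R) • m) :
    ∀ P : Submodule R M, (∀ (s : S) (x : M), (s : R) • x ∈ P → x ∈ P) →
    ∃ (k : ℕ) (N : ℕ → Submodule R M) (t : ℕ) (i : ℕ → ℕ),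
      N 0 = ⊥ ∧ N k = P ∧ (∀ a < k, N a ⋖ N (a + 1)) ∧
      i 0 = 0 ∧ i t = k ∧ (∀ j < t, i j < i (j + 1)) ∧
      (∀ j ≤ t, ∀ (s : S) (x : M), (s : R) • x ∈ N (i j) → x ∈ N (i j)) ∧
      (∀ a, 1 ≤ a → a ≤ k → ∃ j, 1 ≤ j ∧ j ≤ t ∧ i (j - 1) < a ∧ a ≤ i j ∧
        satS S (N a) = N (i j)) := by
  have wflt : WellFounded ((· < ·) : Submodule R M → Submodule R M → Prop) := IsWellFounded.wf
  have wfgt : WellFounded ((· > ·) : Submodule R M → Submodule R M → Prop) := IsWellFounded.wf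
  have hbot : ∀ (s : S) (x : M), (s : R) • x ∈ (⊥ : Submodule R M) → x ∈ (⊥ : Submodule R M) := by
    intro s x hx
    simp only [Submodule.mem_bot] at hx ⊢
    exact hinj s (by simpa using hx)
  intro P
  induction P using WellFoundedLT.induction with
  | _ P ih =>
  intro hP
  rcases eq_or_ne P ⊥ with rfl | hne
  · exact ⟨0, fun _ => ⊥, 0, fun _ => 0, rfl, rfl, by omega, rfl, rfl, by omega,
      fun j _ => hbot, by omega⟩
  · -- pick a maximal saturated proper submodule Q of P
    obtain ⟨Q, ⟨hQsat, hQP⟩, hmax⟩ := wfgt.has_min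
      {Z | (∀ (s : S) (x : M), (s : R) • x ∈ Z → x ∈ Z) ∧ Z < P}
      ⟨⊥, hbot, bot_lt_iff_ne_bot.mpr hne⟩
    obtain ⟨k, N, t, i, hN0, hNk, hNcov, hi0, hit, hilt, hisat, hblock⟩ := ih Q hQP hQsat
    obtain ⟨m, c, hc0, hcm, hccov⟩ := exists_cov_chain wflt wfgt Q P hQP.le
    have hm1 : 1 ≤ m := by
      rcases Nat.eq_zero_or_pos m with rfl | h
      · exact absurd (hc0 ▸ hcm) hQP.ne
      · exact h
    have hclt : ∀ a < m, c a < c (a + 1) := fun a ha => (hccov a ha).lt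
    have hik : ∀ j ≤ t, i j ≤ k := fun j hj => hit ▸ chain_le hilt hj le_rfl
    set N' : ℕ → Submodule R M := fun a => if a ≤ k then N a else c (a - k) with hN'def
    set i' : ℕ → ℕ := fun j => if j ≤ t then i j else k + m with hi'def
    have hN'le : ∀ a, a ≤ k → N' a = N a := fun a ha => if_pos ha
    have hN'gt : ∀ a, k < a → N' a = c (a - k) := fun a ha => if_neg (by omega)
    have hi'le : ∀ j, j ≤ t → i' j = i j := fun j hj => if_pos hj
    have hi'gt : ∀ j, t < j → i' j = k + m := fun j hj => if_neg (by omega)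
    have ekm : k + m - k = m := by omega
    refine ⟨k + m, N', t + 1, i', ?_, ?_, ?_, ?_, ?_, ?_, ?_, ?_⟩
    · rw [hN'le 0 (by omega), hN0]
    · rw [hN'gt (k + m) (by omega), ekm, hcm]
    · intro a ha
      rcases lt_trichotomy a k with h' | rfl | h'
      · rw [hN'le a (by omega), hN'le (a + 1) (by omega)]
        exact hNcov a h'
      · rw [hN'le a le_rfl, hN'gt (a + 1) (by omega)]
        have e : a + 1 - a = 1 := by omega
        rw [e, hNk, ← hc0]
        exact hccov 0 (by omega)
      · rw [hN'gt a h', hN'gt (a + 1) (by omega)]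
        have e : a + 1 - k = (a - k) + 1 := by omega
        rw [e]
        exact hccov (a - k) (by omega)
    · rw [hi'le 0 (by omega), hi0]
    · exact hi'gt (t + 1) (by omega)
    · intro j hj
      rcases lt_trichotomy j t with h' | rfl | h'
      · rw [hi'le j (by omega), hi'le (j + 1) (by omega)]
        exact hilt j h'
      · rw [hi'le j le_rfl, hi'gt (j + 1) (by omega), hit]
        omega
      · omega
    · intro j hj
      rcases eq_or_lt_of_le hj with rfl | hjt
      · rw [hi'gt (t + 1) (by omega), hN'gt (k + m) (by omega), ekm, hcm]
        exact hP
      · have hjt' : j ≤ t := by omega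
        rw [hi'le j hjt', hN'le (i j) (hik j hjt')]
        exact hisat j hjt'
    · intro a h1a hak
      rcases le_or_gt a k with h' | h'
      · obtain ⟨j, hj1, hjt, hja, haj, hsat⟩ := hblock a h1a h'
        refine ⟨j, hj1, by omega, ?_, ?_, ?_⟩
        · rwa [hi'le (j - 1) (by omega)]
        · rwa [hi'le j hjt]
        · rw [hN'le a h', hi'le j hjt, hN'le (i j) (hik j hjt)]
          exact hsat
      · have hb1 : 1 ≤ a - k := by omega
        have hbm : a - k ≤ m := by omega
        have hQlt : Q < c (a - k) := hc0 ▸ chain_lt hclt (by omega) hbm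
        have hle : c (a - k) ≤ P := hcm ▸ chain_le hclt hbm le_rfl
        have hsatP : satS S (c (a - k)) = P := by
          rcases eq_or_lt_of_le ((satS_mono hle).trans (satS_eq_self hP).le) with h | h
          · exact h
          · exact absurd (hQlt.trans_le (le_satS _)) (hmax _ ⟨isSatd_satS _, h⟩)
        refine ⟨t + 1, by omega, le_rfl, ?_, ?_, ?_⟩
        · have e : t + 1 - 1 = t := by omega
          rw [e, hi'le t le_rfl, hit]
          exact h'
        · rw [hi'gt (t + 1) (by omega)]
          exact hak
        · rw [hN'gt a h', hi'gt (t + 1) (by omega), hN'gt (k + m) (by omega), ekm, hcm]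
          exact hsatP

end Main

/-- existence of an `S`-injective composition series. A finite-length module `M`
on which every element of `S` acts injectively has a composition series
`0 = N 0 ⊂ N 1 ⊂ ⋯ ⊂ N k = M` together with block indices `0 = i 0 < i 1 < ⋯ < i t = k` such
that (a) for `1 ≤ a, b ≤ k`, `S⁻¹(N a) = S⁻¹(N b)` iff `a` and `b` lie in the same block
`[i (j-1) + 1, i j]`, and (b) every element of `S` acts injectively on each block quotient
`N (i j) / N (i (j-1))`. -/
theorem stmt15 {R : Type*} [Ring R] {S : Submonoid R} [OreLocalization.OreSet S]
    {M : Type*} [AddCommGroup M] [Module R M]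
    (hfl : IsFiniteLength R M)
    (hinj : ∀ s : S, Function.Injective fun m : M => (s : R) • m) :
    ∃ (k : ℕ) (N : ℕ → Submodule R M) (t : ℕ) (i : ℕ → ℕ),
      N 0 = ⊥ ∧ N k = ⊤ ∧ (∀ a < k, N a ⋖ N (a + 1)) ∧
      i 0 = 0 ∧ i t = k ∧ (∀ j < t, i j < i (j + 1)) ∧
      (∀ a b, 1 ≤ a → a ≤ k → 1 ≤ b → b ≤ k →
        (oreLocSub (S := S) (N a) = oreLocSub (S := S) (N b) ↔
          ∃ j, 1 ≤ j ∧ j ≤ t ∧ i (j - 1) < a ∧ a ≤ i j ∧ i (j - 1) < b ∧ b ≤ i j)) ∧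
      (∀ j, 1 ≤ j → j ≤ t →
        ∀ s : S, ∀ x ∈ N (i j), (s : R) • x ∈ N (i (j - 1)) → x ∈ N (i (j - 1))) := by
  haveI := (isFiniteLength_iff_isNoetherian_isArtinian.mp hfl).1
  haveI := (isFiniteLength_iff_isNoetherian_isArtinian.mp hfl).2
  obtain ⟨k, N, t, i, hN0, hNk, hNcov, hi0, hit, hilt, hisat, hblock⟩ :=
    inv_main hinj ⊤ (fun s x _ => trivial)
  have hik : ∀ j ≤ t, i j ≤ k := fun j hj => hit ▸ chain_le hilt hj le_rfl
  have hNlt : ∀ {x y : ℕ}, x < y → y ≤ k → N x < N y :=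
    fun hxy hyk => chain_lt (fun a ha => (hNcov a ha).lt) hxy hyk
  have huniq : ∀ a j j', 1 ≤ j → j ≤ t → 1 ≤ j' → j' ≤ t → i (j - 1) < a → a ≤ i j →
      i (j' - 1) < a → a ≤ i j' → j = j' := by
    intro a j j' h1 h2 h1' h2' hja haj hja' haj'
    by_contra hne
    rcases lt_or_gt_of_ne hne with h | h
    · have : i j ≤ i (j' - 1) := chain_le hilt (by omega) (by omega)
      omega
    · have : i j' ≤ i (j - 1) := chain_le hilt (by omega) (by omega)
      omega
  refine ⟨k, N, t, i, hN0, hNk, hNcov, hi0, hit, hilt, ?_, ?_⟩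
  · intro a b h1a hak h1b hbk
    obtain ⟨ja, hja1, hjat, hjaa, haja, hsata⟩ := hblock a h1a hak
    obtain ⟨jb, hjb1, hjbt, hjbb, hbjb, hsatb⟩ := hblock b h1b hbk
    rw [oreLocSub_eq_iff]
    constructor
    · intro h
      have hNeq : N (i ja) = N (i jb) := by rw [← hsata, ← hsatb, h]
      have hjeq : ja = jb := by
        by_contra hne
        rcases lt_or_gt_of_ne hne with hlt | hlt
        · exact absurd hNeq (hNlt (chain_lt hilt hlt hjbt) (hik jb hjbt)).ne
        · exact absurd hNeq.symm (hNlt (chain_lt hilt hlt hjat) (hik ja hjat)).ne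
      exact ⟨ja, hja1, hjat, hjaa, haja, hjeq ▸ hjbb, hjeq ▸ hbjb⟩
    · rintro ⟨j, hj1, hjt, hja, haj, hjb, hbj⟩
      have e1 : ja = j := huniq a ja j hja1 hjat hj1 hjt hjaa haja hja haj
      have e2 : jb = j := huniq b jb j hjb1 hjbt hj1 hjt hjbb hbjb hjb hbj
      rw [hsata, hsatb, e1, e2]
  · intro j hj1 hjt s x _ hsx
    exact hisat (j - 1) (by omega) s x hsx
end

section
/- Let R be a ring, S a left Ore multiplicative subset, and M₁ ⊆ M₂ R-modules on which every element of S acts injectively, such that M₂/M₁ has finite length and S⁻¹M₁ = S⁻¹M₂ inside S⁻¹M₂. Then for every pair of intermediate submodules M₁ ⊆ L ⊆ L′ ⊆ M₂ with L′/L simple, the quotient L′/L has nonzero S-torsion (i.e., some element of S does not act injectively on L′/L). -/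
open OreLocalization

/-- if `N ⊆ M` are `S`-injective, `M/N` has finite length and `S⁻¹N = S⁻¹M`,
then every simple subquotient `L′/L` with `N ⊆ L ⊆ L′ ⊆ M` has nonzero `S`-torsion. -/
theorem stmt16 {R : Type*} [Ring R] {S : Submonoid R} [OreLocalization.OreSet S]
    {M : Type*} [AddCommGroup M] [Module R M]
    (hinj : ∀ s : S, Function.Injective fun m : M => (s : R) • m)
    (N : Submodule R M) (hfl : IsFiniteLength R (M ⧸ N))
    (hloc : oreLocSub (S := S) N = oreLocSub (S := S) (⊤ : Submodule R M)) :
    ∀ L L' : Submodule R M, N ≤ L → L ⋖ L' →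
      ∃ (s : S) (x : M), x ∈ L' ∧ x ∉ L ∧ (s : R) • x ∈ L := by
  intro L L' hNL hcov
  obtain ⟨x, hxL', hxL⟩ := SetLike.exists_of_lt hcov.lt
  -- the set of fractions `n /ₒ s` with `n ∈ N` is already a submodule
  let P : Submodule R M[S⁻¹] :=
  { carrier := {y : M[S⁻¹] | ∃ n ∈ N, ∃ s : S, y = n /ₒ s}
    zero_mem' := ⟨0, N.zero_mem, 1, (zero_oreDiv (1 : S)).symm⟩
    add_mem' := by
      rintro _ _ ⟨n, hn, s, rfl⟩ ⟨n', hn', s', rfl⟩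
      refine ⟨oreDenom (s : R) s' • n + oreNum (s : R) s' • n',
        N.add_mem ?_ (N.smul_mem _ hn'), oreDenom (s : R) s' * s,
        oreDiv_add_char s s' (oreNum (s : R) s') (oreDenom (s : R) s') (ore_eq _ _)⟩
      rw [Submonoid.smul_def]
      exact N.smul_mem _ hn
    smul_mem' := by
      rintro r _ ⟨n, hn, s, rfl⟩
      refine ⟨oreNum r s • n, N.smul_mem _ hn, oreDenom r s * 1, ?_⟩
      rw [← oreDiv_one_smul (r : R) ((n : M) /ₒ s), oreDiv_smul_oreDiv] }
  have hP : oreLocSub (S := S) N ≤ P := Submodule.span_le.mpr fun y hy => hy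
  have hx1 : (x /ₒ (1 : S)) ∈ oreLocSub (S := S) N := by
    rw [hloc]
    exact Submodule.subset_span ⟨x, Submodule.mem_top, 1, rfl⟩
  obtain ⟨n, hn, s, heq⟩ := hP hx1
  rw [oreDiv_eq_iff] at heq
  obtain ⟨u, v, h1, h2⟩ := heq
  rw [Submonoid.coe_one, mul_one] at h2
  refine ⟨u * s, x, hxL', hxL, ?_⟩
  have hvx : ((u * s : S) : R) • x = (u : R) • n := by
    rw [Submonoid.coe_mul, h2, ← h1, Submonoid.smul_def]
  rw [hvx]
  exact hNL (N.smul_mem _ hn)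
end
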